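/- For any ε > 0 and any continuous probability density function f on ℝ, there exists m_0 such that for all m ≥ m_0 and every admissible choice of green list G (one interval from each of the m pairs partitioning [0,1] into 2m equal subintervals), the probability that a random variable x with density f has fractional part in G satisfies |P(x − ⌊x⌋ ∈ G) − 1/2| < 2ε. -/

import Mathlib

open MeasureTheory Set

def greenInterval (m : ℕ) (b : Fin m → Bool) (k : Fin m) : Set ℝ :=
  Set.Icc ((2 * (k : ℝ) + (if b k then 1 else 0)) / (2 * m))
          ((2 * (k : ℝ) + (if b k then 1 else 0) + 1) / (2 * m))

def greenSet (m : ℕ) (b : Fin m → Bool) : Set ℝ :=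
  ⋃ k : Fin m, greenInterval m b k

/-!
Cut `ℝ` into cells of width `h = 1/(2m)` and let `T` be the union of the cells that are green
modulo `1`; up to a null set, `T = {x | Int.fract x ∈ greenSet m b}`. Each pair consists of two
adjacent cells exactly one of which is green, so moving the green even cells one cell to the right
and the green odd cells one cell to the left gives exactly the complement of `T`. Hence `∫_T f`
and `∫_{Tᶜ} f = 1 - ∫_T f` differ by at most `∫ |f (x + h) - f x| + ∫ |f (x - h) - f x|`, which
tends to `0` with `h` because translation is continuous in `L¹`.
-/

open Filter Topology

variable {E : Type*} [NormedAddCommGroup E]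

theorem HasCompactSupport.tendsto_integral_norm_comp_add_sub {g : ℝ → E}
    (hg : HasCompactSupport g) (hgc : Continuous g) :
    Tendsto (fun h => ∫ x, ‖g (x + h) - g x‖) (𝓝 0) (𝓝 0) := by
  obtain ⟨R, -, hR⟩ := hg.exists_pos_le_norm
  have hK : Continuous fun h => ∫ x in Icc (-(R + 1)) (R + 1), ‖g (x + h) - g x‖ :=
    continuous_parametric_integral_of_continuous (by fun_prop) isCompact_Icc
  have hsupp : (fun h => ∫ x in Icc (-(R + 1)) (R + 1), ‖g (x + h) - g x‖)
      =ᶠ[𝓝 0] fun h => ∫ x, ‖g (x + h) - g x‖ := by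
    filter_upwards [Metric.ball_mem_nhds (0 : ℝ) one_pos] with h hh
    refine setIntegral_eq_integral_of_forall_compl_eq_zero fun x hx => ?_
    rw [mem_Icc, ← abs_le, not_le] at hx
    rw [Metric.mem_ball, Real.dist_eq, sub_zero] at hh
    have hx' : R ≤ ‖x + h‖ := by
      have := abs_sub (x + h) h
      rw [add_sub_cancel_right] at this
      rw [Real.norm_eq_abs]
      linarith
    rw [hR x (by rw [Real.norm_eq_abs]; linarith), hR _ hx', sub_zero, norm_zero]
  simpa using (hK.tendsto 0).congr' hsupp

theorem MeasureTheory.Integrable.tendsto_integral_norm_comp_add_sub [NormedSpace ℝ E]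
    {f : ℝ → E} (hf : Integrable f) : Tendsto (fun h => ∫ x, ‖f (x + h) - f x‖) (𝓝 0) (𝓝 0) := by
  rw [Metric.tendsto_nhds]
  intro ε hε
  obtain ⟨g, hg_supp, hfg, hg_cont, hg_int⟩ :=
    hf.exists_hasCompactSupport_integral_sub_le (show 0 < ε / 3 by positivity)
  filter_upwards [Metric.tendsto_nhds.1 (hg_supp.tendsto_integral_norm_comp_add_sub hg_cont)
    (ε / 3) (by positivity)] with h hh
  rw [Real.dist_eq, sub_zero, abs_of_nonneg (integral_nonneg fun _ => norm_nonneg _)] at hh ⊢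
  have hfh := hf.comp_add_right h
  have hgh := hg_int.comp_add_right h
  have i₁ : Integrable fun x => ‖f (x + h) - g (x + h)‖ := (hfh.sub hgh).norm
  have i₂ : Integrable fun x => ‖g (x + h) - g x‖ := (hgh.sub hg_int).norm
  have i₃ : Integrable fun x => ‖g x - f x‖ := (hg_int.sub hf).norm
  calc ∫ x, ‖f (x + h) - f x‖
      ≤ ∫ x, (‖f (x + h) - g (x + h)‖ + ‖g (x + h) - g x‖ + ‖g x - f x‖) := by
        refine integral_mono (hfh.sub hf).norm ((i₁.add i₂).add i₃) fun x => ?_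
        exact (norm_sub_le_norm_sub_add_norm_sub _ (g x) _).trans
          (by gcongr; exact norm_sub_le_norm_sub_add_norm_sub _ _ _)
    _ = (∫ x, ‖f (x + h) - g (x + h)‖) + (∫ x, ‖g (x + h) - g x‖) + ∫ x, ‖g x - f x‖ := by
        rw [integral_add _ i₃, integral_add i₁ i₂]
        exact i₁.add i₂
    _ < ε := by
        rw [integral_add_right_eq_self (fun x => ‖f x - g x‖) h]
        simp_rw [norm_sub_rev (g _) (f _)]
        linarith

theorem norm_setIntegral_preimage_add_sub_le [NormedSpace ℝ E] {f : ℝ → E} (hf : Integrable f)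
    (s : Set ℝ) (h : ℝ) :
    ‖(∫ x in (· + h) ⁻¹' s, f x) - ∫ x in s, f x‖ ≤ ∫ x, ‖f (x - h) - f x‖ := by
  have hshift : ∫ x in (· + h) ⁻¹' s, f x = ∫ x in s, f (x - h) := by
    have := (measurePreserving_add_right volume h).setIntegral_preimage_emb
      (measurableEmbedding_addRight h) (fun x => f (x - h)) s
    simpa only [add_sub_cancel_right] using this
  rw [hshift, ← integral_sub (hf.comp_sub_right h).integrableOn hf.integrableOn]
  exact (norm_integral_le_integral_norm _).trans
    (setIntegral_le_integral ((hf.comp_sub_right h).sub hf).norm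
      (Eventually.of_forall fun _ => norm_nonneg _))

theorem measurableSet_floor_mul_mem (a : ℝ) (P : Set ℤ) :
    MeasurableSet {x : ℝ | ⌊a * x⌋ ∈ P} :=
  (Int.measurable_floor.comp (measurable_const_mul a)) MeasurableSet.of_discrete

theorem norm_setIntegral_floor_mul_mem_sub_compl_le [NormedSpace ℝ E] {f : ℝ → E}
    (hf : Integrable f) {a : ℝ} (ha : a ≠ 0) {P : Set ℤ} (hP : ∀ n, Even n → (n + 1 ∈ P ↔ n ∉ P)) :
    ‖(∫ x in {x | ⌊a * x⌋ ∈ P}, f x) - ∫ x in {x | ⌊a * x⌋ ∈ P}ᶜ, f x‖ ≤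
      (∫ x, ‖f (x + a⁻¹) - f x‖) + ∫ x, ‖f (x - a⁻¹) - f x‖ := by
  have hstep : ∀ x, ⌊a * (x + a⁻¹)⌋ = ⌊a * x⌋ + 1 := fun x => by
    rw [mul_add, mul_inv_cancel₀ ha, Int.floor_add_one]
  have hstep' : ∀ x, ⌊a * (x + -a⁻¹)⌋ = ⌊a * x⌋ - 1 := fun x => by
    rw [mul_add, mul_neg, mul_inv_cancel₀ ha, ← sub_eq_add_neg, Int.floor_sub_one]
  set Ev := {x : ℝ | ⌊a * x⌋ ∈ {n | n ∈ P ∧ Even n}}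
  set Od := {x : ℝ | ⌊a * x⌋ ∈ {n | n ∈ P ∧ ¬Even n}}
  have hsplit : {x | ⌊a * x⌋ ∈ P} = Ev ∪ Od := by
    ext x; simp only [Ev, Od, mem_ofPred_eq, mem_union]; tauto
  have hsplit' : {x | ⌊a * x⌋ ∈ P}ᶜ = (· + -a⁻¹) ⁻¹' Ev ∪ (· + a⁻¹) ⁻¹' Od := by
    ext x
    have := hP (⌊a * x⌋ - 1)
    simp only [Ev, Od, mem_compl_iff, mem_ofPred_eq, mem_union, mem_preimage, hstep, hstep',
      Int.even_add_one, Int.even_sub_one, sub_add_cancel] at this ⊢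
    by_cases he : Even ⌊a * x⌋ <;> simp_all
  have hdisj : Disjoint Ev Od := by
    rw [Set.disjoint_left]; intro x hx hx'; exact hx'.2 hx.2
  have hdisj' : Disjoint ((· + -a⁻¹) ⁻¹' Ev) ((· + a⁻¹) ⁻¹' Od) := by
    rw [Set.disjoint_left]; intro x hx hx'
    simp only [Ev, Od, mem_ofPred_eq, mem_preimage, hstep, hstep', Int.even_add_one,
      Int.even_sub_one] at hx hx'
    exact hx'.2 hx.2
  have hm := measurableSet_floor_mul_mem a
  rw [hsplit', hsplit, setIntegral_union hdisj (hm _) hf.integrableOn hf.integrableOn,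
    setIntegral_union hdisj' (measurable_add_const _ (hm _)) hf.integrableOn hf.integrableOn]
  have hE := norm_setIntegral_preimage_add_sub_le hf Ev (-a⁻¹)
  have hO := norm_setIntegral_preimage_add_sub_le hf Od a⁻¹
  simp only [sub_neg_eq_add] at hE
  calc _ = ‖-(((∫ x in (· + -a⁻¹) ⁻¹' Ev, f x) - ∫ x in Ev, f x) +
          ((∫ x in (· + a⁻¹) ⁻¹' Od, f x) - ∫ x in Od, f x))‖ := by congr 1; abel
    _ ≤ _ := by rw [norm_neg]; exact (norm_add_le _ _).trans (add_le_add hE hO)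

/-- `n ∈ greenCells m b` iff the cell `[n / (2m), (n + 1) / (2m)]` is green modulo `1`. -/
def greenCells (m : ℕ) (b : Fin m → Bool) : Set ℤ :=
  {n | ∃ k : Fin m, n % (2 * m) = 2 * k + (if b k then 1 else 0)}

theorem add_one_mem_greenCells_iff {m : ℕ} (hm : 0 < m) (b : Fin m → Bool) {n : ℤ}
    (hn : Even n) : n + 1 ∈ greenCells m b ↔ n ∉ greenCells m b := by
  have hr₀ : 0 ≤ n % (2 * m) := Int.emod_nonneg _ (by omega)
  have hr : n % (2 * m) < 2 * m := Int.emod_lt_of_pos _ (by omega)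
  have hr₂ : n % (2 * m) % 2 = 0 := by
    rw [Int.emod_emod_of_dvd _ (dvd_mul_right 2 _)]; exact Int.even_iff.1 hn
  have hsucc : (n + 1) % (2 * m) = n % (2 * m) + 1 := by
    rw [Int.add_emod, Int.emod_eq_of_lt (by omega) (by omega : (1 : ℤ) < 2 * m),
      Int.emod_eq_of_lt (by omega) (by omega)]
  simp only [greenCells, mem_ofPred_eq, hsucc]
  constructor
  · rintro ⟨k, hk⟩ ⟨k', hk'⟩
    have hkk : k = k' := by
      ext; split_ifs at hk hk' <;> omega
    subst hkk
    split_ifs at hk hk' <;> omega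
  · intro hn'
    refine ⟨⟨(n % (2 * m) / 2).toNat, by omega⟩, ?_⟩
    split_ifs with hb
    · simp only; omega
    · exact absurd ⟨_, by rw [if_neg hb]; simp only; omega⟩ hn'

theorem fract_mem_greenSet_iff {m : ℕ} (hm : 0 < m) (b : Fin m → Bool) {x : ℝ}
    (hx : ∀ n : ℤ, 2 * m * x ≠ n) :
    Int.fract x ∈ greenSet m b ↔ ⌊2 * m * x⌋ ∈ greenCells m b := by
  have hm' : (0 : ℝ) < 2 * m := by positivity
  set y := 2 * m * Int.fract x with hy_def
  have hcell : ⌊2 * m * x⌋ % (2 * m) = ⌊y⌋ := by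
    have : 2 * m * x = ((2 * m * ⌊x⌋ : ℤ) : ℝ) + y := by
      push_cast; rw [hy_def, Int.fract]; ring
    rw [this, Int.floor_intCast_add, add_comm, Int.add_mul_emod_self_left]
    refine Int.emod_eq_of_lt (Int.floor_nonneg.2 (by positivity)) (Int.floor_lt.2 ?_)
    push_cast
    nlinarith [Int.fract_lt_one x]
  have hy : ∀ n : ℤ, y ≠ n := fun n hn => hx (n + 2 * m * ⌊x⌋) (by
    push_cast; rw [← hn, hy_def, Int.fract]; ring)
  simp only [greenSet, greenInterval, greenCells, mem_iUnion, mem_ofPred_eq, hcell,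
    Int.floor_eq_iff, mem_Icc, div_le_iff₀ hm', le_div_iff₀ hm']
  refine exists_congr fun k => ?_
  set q : ℤ := 2 * k + if b k then 1 else 0
  have hq : (q : ℝ) = 2 * k + if b k then 1 else 0 := by push_cast [q]; rfl
  rw [hq, mul_comm (Int.fract x), ← hy_def]
  refine and_congr_right fun _ => ⟨fun h => h.lt_of_ne ?_, le_of_lt⟩
  rw [← hq]
  exact_mod_cast hy (q + 1)

theorem ae_mul_ne_intCast {a : ℝ} (ha : a ≠ 0) : ∀ᵐ x : ℝ, ∀ n : ℤ, a * x ≠ n := by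
  rw [ae_iff]
  refine measure_mono_null (fun x hx => ?_)
    ((countable_range fun n : ℤ => (n : ℝ) / a).measure_zero volume)
  simp only [mem_ofPred_eq, not_forall, not_not] at hx
  obtain ⟨n, hn⟩ := hx
  exact ⟨n, by simp only [← hn]; field_simp⟩

theorem toReal_withDensity_ofReal_apply {α : Type*} [MeasurableSpace α] {μ : Measure α}
    [SFinite μ] {f : α → ℝ} {s : Set α} (hf : IntegrableOn f s μ) (hf₀ : 0 ≤ᵐ[μ.restrict s] f) :
    ((μ.withDensity fun x => ENNReal.ofReal (f x)) s).toReal = ∫ x in s, f x ∂μ := by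
  rw [withDensity_apply' _ s, ← ofReal_integral_eq_lintegral_ofReal hf hf₀,
    ENNReal.toReal_ofReal (integral_nonneg_of_ae hf₀)]

theorem prob_fract_green_tendsto_half_general (f : ℝ → ℝ)
    (hf_nonneg : ∀ x, 0 ≤ f x)
    (hf_int : ∫ x, f x = 1) :
    ∀ ε > (0 : ℝ), ∃ m₀ : ℕ, ∀ m ≥ m₀, ∀ b : Fin m → Bool,
      |((volume.withDensity fun x => ENNReal.ofReal (f x))
          {x : ℝ | Int.fract x ∈ greenSet m b}).toReal - 1 / 2| < 2 * ε := by
  intro ε hε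
  have hfi : Integrable f := by
    by_contra h
    rw [integral_undef h] at hf_int
    exact zero_ne_one hf_int
  obtain ⟨δ, hδ, hω⟩ :=
    Metric.tendsto_nhds_nhds.1 hfi.tendsto_integral_norm_comp_add_sub ε hε
  obtain ⟨m₀, hm₀⟩ := exists_nat_gt δ⁻¹
  refine ⟨m₀, fun m hm b => ?_⟩
  have hm_pos : (0 : ℝ) < m := (inv_pos.2 hδ).trans (hm₀.trans_le (by exact_mod_cast hm))
  have hwidth : dist (2 * m : ℝ)⁻¹ 0 < δ := by
    rw [Real.dist_eq, sub_zero, abs_of_pos (by positivity), inv_lt_comm₀ (by positivity) hδ]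
    linarith [show (m₀ : ℝ) ≤ m by exact_mod_cast hm]
  have hright := hω hwidth
  have hleft := hω (x := -(2 * m : ℝ)⁻¹)
    (by rwa [dist_zero_right, norm_neg, ← dist_zero_right])
  simp only [Real.dist_eq, sub_zero, ← sub_eq_add_neg] at hright hleft
  have hbal := norm_setIntegral_floor_mul_mem_sub_compl_le hfi (a := 2 * m) (by positivity)
    fun _ => add_one_mem_greenCells_iff (by exact_mod_cast hm_pos) b
  have htotal := integral_add_compl (measurableSet_floor_mul_mem (2 * m) (greenCells m b)) hfi
  have hgrid :
      {x : ℝ | Int.fract x ∈ greenSet m b} =ᵐ[volume] {x | ⌊2 * m * x⌋ ∈ greenCells m b} :=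
    eventuallyEq_set.2 <| (ae_mul_ne_intCast (by positivity)).mono fun x hx =>
      fract_mem_greenSet_iff (by exact_mod_cast hm_pos) b hx
  rw [toReal_withDensity_ofReal_apply hfi.integrableOn (ae_of_all _ hf_nonneg),
    setIntegral_congr_set hgrid]
  rw [Real.norm_eq_abs, abs_le] at hbal
  rw [abs_lt]
  constructor <;> linarith [abs_lt.1 hright, abs_lt.1 hleft]

/-- **Preliminary for detection.** For a continuous probability density `f` on `ℝ` and any
`ε > 0`, there is `m₀` such that for all `m ≥ m₀` and every admissible green list (one
interval from each of the `m` pairs), the probability that a random variable with density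
`f` has fractional part in the green list is within `2ε` of `1/2`. -/
theorem prob_fract_green_tendsto_half (f : ℝ → ℝ) (hf_cont : Continuous f)
    (hf_nonneg : ∀ x, 0 ≤ f x)
    (hf_int : ∫ x, f x = 1) :
    ∀ ε > (0 : ℝ), ∃ m₀ : ℕ, ∀ m ≥ m₀, ∀ b : Fin m → Bool,
      |((volume.withDensity fun x => ENNReal.ofReal (f x))
          {x : ℝ | Int.fract x ∈ greenSet m b}).toReal - 1 / 2| < 2 * ε :=
  prob_fract_green_tendsto_half_general f hf_nonneg hf_int
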